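/- arXiv:2210.15006 — 6 statements merged into one kernel-verified Lean document; each statement's English description precedes it below -/
import Mathlib

section
/- For every natural number M and every nonzero real number q, one has ∑_{k=0}^{M} [2k+1]_q · ( C(2M, M−k) − C(2M, M−k−1) ) = (q + q⁻¹)^{2M}, where [2k+1]_q := ∑_{j=0}^{2k} q^{2j−2k}, C(n,r) denotes the binomial coefficient, and by convention C(2M, M−k−1) = 0 when k = M. -/
/-!
Expand `(q + q⁻¹)^(2M) = ∑ᵢ C(2M, i) q^(2i-2M)` and write each binomial coefficient as the
telescoping sum `C(2M, i) = ∑_{|i-M| ≤ k ≤ M} (C(2M, M-k) - C(2M, M-k-1))`. Exchanging the two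
sums, the coefficient of `C(2M, M-k) - C(2M, M-k-1)` is `∑_{|i-M| ≤ k} q^(2i-2M) = [2k+1]_q`.
-/

open Finset

def chooseDiff (R : Type*) [AddCommGroupWithOne R] (n m k : ℕ) : R :=
  (n.choose (m - k) : R) - if k = m then 0 else (n.choose (m - k - 1) : R)

theorem sum_Icc_chooseDiff {R : Type*} [AddCommGroupWithOne R] (n m : ℕ) {s : ℕ}
    (hs : s ≤ m) :
    ∑ k ∈ Icc (m - s) m, chooseDiff R n m k = n.choose s := by
  induction s with
  | zero => simp [chooseDiff]
  | succ s ih =>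
    have hIcc : Icc (m - (s + 1)) m = insert (m - (s + 1)) (Icc (m - s) m) := by
      rw [show m - s = m - (s + 1) + 1 by omega, insert_Icc_add_one_left_eq_Icc (by omega)]
    rw [hIcc, sum_insert (by simp; omega), ih (by omega), chooseDiff, if_neg (by omega),
      show m - (m - (s + 1)) = s + 1 by omega, show s + 1 - 1 = s by omega, sub_add_cancel]

theorem sum_Icc_dist_chooseDiff {R : Type*} [AddCommGroupWithOne R] {M i : ℕ} (hi : i ≤ 2 * M) :
    ∑ k ∈ Icc (Nat.dist i M) M, chooseDiff R (2 * M) M k = (2 * M).choose i := by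
  have hdist : Nat.dist i M = M - min i (2 * M - i) := by unfold Nat.dist; omega
  rw [hdist, sum_Icc_chooseDiff _ _ (by omega)]
  rcases le_total i (2 * M - i) with h | h
  · rw [min_eq_left h]
  · rw [min_eq_right h, Nat.choose_symm hi]

theorem sum_Icc_zpow_eq_sum_range {K : Type*} [DivisionRing K] (q : K) {M k : ℕ} (hk : k ≤ M) :
    ∑ i ∈ Icc (M - k) (M + k), q ^ (2 * (i : ℤ) - 2 * M) =
      ∑ j ∈ range (2 * k + 1), q ^ (2 * (j : ℤ) - 2 * k) := by
  rw [← Ico_add_one_right_eq_Icc, sum_Ico_eq_sum_range,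
    show M + k + 1 - (M - k) = 2 * k + 1 by omega]
  refine sum_congr rfl fun j _ => ?_
  push_cast [hk]
  ring_nf

theorem add_inv_pow_eq_sum_zpow_mul_choose {K : Type*} [Field K] {q : K} (hq : q ≠ 0) (n : ℕ) :
    (q + q⁻¹) ^ n = ∑ i ∈ range (n + 1), q ^ (2 * (i : ℤ) - n) * (n.choose i : K) := by
  rw [add_pow]
  refine sum_congr rfl fun i hi => ?_
  rw [← zpow_natCast, ← zpow_natCast, inv_zpow', ← zpow_add₀ hq,
    Nat.cast_sub (mem_range_succ_iff.mp hi)]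
  ring_nf

/-- For every natural number `M` and every nonzero real `q`,
`∑_{k=0}^{M} [2k+1]_q · (C(2M, M−k) − C(2M, M−k−1)) = (q + q⁻¹)^(2M)`,
where `[2k+1]_q = ∑_{j=0}^{2k} q^(2j−2k)` and by convention the second
binomial coefficient is `0` when `k = M`. -/
theorem stmt0 (M : ℕ) (q : ℝ) (hq : q ≠ 0) :
    ∑ k ∈ Finset.range (M + 1),
      (∑ j ∈ Finset.range (2 * k + 1), q ^ (2 * (j : ℤ) - 2 * (k : ℤ))) *
        ((Nat.choose (2 * M) (M - k) : ℝ) -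
          (if k = M then 0 else (Nat.choose (2 * M) (M - k - 1) : ℝ)))
      = (q + q⁻¹) ^ (2 * M) := by
  change ∑ k ∈ range (M + 1), _ * chooseDiff ℝ (2 * M) M k = _
  calc _ = ∑ k ∈ range (M + 1), ∑ i ∈ Icc (M - k) (M + k),
          q ^ (2 * (i : ℤ) - 2 * M) * chooseDiff ℝ (2 * M) M k := by
        refine sum_congr rfl fun k hk => ?_
        rw [← sum_Icc_zpow_eq_sum_range q (mem_range_succ_iff.mp hk), sum_mul]
    _ = ∑ i ∈ range (2 * M + 1), ∑ k ∈ Icc (Nat.dist i M) M,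
          q ^ (2 * (i : ℤ) - 2 * M) * chooseDiff ℝ (2 * M) M k := by
        refine sum_comm' fun k i => ?_
        simp only [mem_range, mem_Icc, Nat.dist]
        omega
    _ = _ := by
        rw [add_inv_pow_eq_sum_zpow_mul_choose hq, Nat.cast_mul, Nat.cast_ofNat]
        refine sum_congr rfl fun i hi => ?_
        rw [← mul_sum, sum_Icc_dist_chooseDiff (mem_range_succ_iff.mp hi)]
end

section
/- For every natural number k and every nonzero real number q, setting χ = q + q⁻¹, one has ∑_{j=0}^{2k} q^{2j−2k} = 4^{−k} · ∑_{n=1}^{k+1} C(2k+1, 2n−1) · χ^{2(k−n+1)} · (χ² − 4)^{n−1}, where C(n,r) denotes the binomial coefficient. -/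
/-!
With `s = x + y` and `d = x - y`, the odd-index half of the binomial expansion gives
`(s + d)^(2k+1) - (s - d)^(2k+1) = 2d · ∑ C(2k+1, 2i+1) s^(2(k-i)) (d²)^i`, while the left side
is `2^(2k+1) (x^(2k+1) - y^(2k+1)) = 2^(2k+1) (x - y) ∑ x^j y^(2k-j)`. Cancelling `2(x - y)` in
`ℤ[x, y]` yields a polynomial identity, valid in every commutative ring; at `x = q`, `y = q⁻¹`
one has `s = χ` and `d² = χ² - 4`.
-/

open Finset

theorem Finset.sum_range_two_mul {M : Type*} [AddCommMonoid M] (f : ℕ → M) (n : ℕ) :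
    ∑ m ∈ range (2 * n), f m = ∑ i ∈ range n, (f (2 * i) + f (2 * i + 1)) := by
  induction n with
  | zero => simp
  | succ n ih =>
    rw [mul_add, mul_one, sum_range_succ, sum_range_succ, sum_range_succ, ih, add_assoc]

variable {R : Type*} [CommRing R]

theorem add_pow_sub_sub_pow_odd (d s : R) (k : ℕ) :
    (d + s) ^ (2 * k + 1) - (-d + s) ^ (2 * k + 1) =
      2 * d * ∑ i ∈ range (k + 1),
        ((2 * k + 1).choose (2 * i + 1) : R) * s ^ (2 * (k - i)) * (d ^ 2) ^ i := by
  rw [add_pow, add_pow, ← sum_sub_distrib, show 2 * k + 1 + 1 = 2 * (k + 1) by ring,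
    sum_range_two_mul, mul_sum]
  refine sum_congr rfl fun i hi => ?_
  have hik : i ≤ k := Nat.lt_succ_iff.mp (mem_range.mp hi)
  rw [show 2 * k + 1 - (2 * i + 1) = 2 * (k - i) by omega, Even.neg_pow ⟨i, by ring⟩,
    Odd.neg_pow ⟨i, rfl⟩]
  ring

theorem sum_choose_odd_mul_add_pow_mul_sub_sq (x y : R) (k : ℕ) :
    ∑ i ∈ range (k + 1), ((2 * k + 1).choose (2 * i + 1) : R) *
        (x + y) ^ (2 * (k - i)) * ((x - y) ^ 2) ^ i =
      4 ^ k * ∑ j ∈ range (2 * k + 1), x ^ j * y ^ (2 * k - j) := by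
  set X : Fin 2 → MvPolynomial (Fin 2) ℤ := MvPolynomial.X
  have hd : (2 : MvPolynomial (Fin 2) ℤ) * (X 0 - X 1) ≠ 0 := by
    refine mul_ne_zero two_ne_zero fun h => one_ne_zero (α := ℤ) ?_
    simpa [X] using congrArg (MvPolynomial.eval ![1, 0]) h
  have universal :
      ∑ i ∈ range (k + 1), ((2 * k + 1).choose (2 * i + 1) : MvPolynomial (Fin 2) ℤ) *
          (X 0 + X 1) ^ (2 * (k - i)) * ((X 0 - X 1) ^ 2) ^ i =
        4 ^ k * ∑ j ∈ range (2 * k + 1), X 0 ^ j * X 1 ^ (2 * k - j) := by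
    refine mul_left_cancel₀ hd ?_
    calc _ = (2 * X 0) ^ (2 * k + 1) - (2 * X 1) ^ (2 * k + 1) := by
          rw [← add_pow_sub_sub_pow_odd, show X 0 - X 1 + (X 0 + X 1) = 2 * X 0 by ring,
            show -(X 0 - X 1) + (X 0 + X 1) = 2 * X 1 by ring]
      _ = 2 * (X 0 - X 1) * (4 ^ k * ∑ j ∈ range (2 * k + 1), X 0 ^ j * X 1 ^ (2 * k - j)) := by
          rw [mul_pow, mul_pow, ← mul_sub, ← geom_sum₂_mul, Nat.add_sub_cancel, pow_succ, pow_mul]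
          ring
  simpa [X] using congrArg (MvPolynomial.aeval ![x, y]) universal

/-- For every `k : ℕ` and nonzero real `q`, with `χ = q + q⁻¹`,
`∑_{j=0}^{2k} q^(2j−2k) = 4^(−k) · ∑_{n=1}^{k+1} C(2k+1, 2n−1) · χ^(2(k−n+1)) · (χ²−4)^(n−1)`.
(The natural-number exponent `2*(k + 1 - n)` equals `2(k − n + 1)` for all
`1 ≤ n ≤ k + 1`.) -/
theorem stmt2 (k : ℕ) (q : ℝ) (hq : q ≠ 0) :
    ∑ j ∈ Finset.range (2 * k + 1), q ^ (2 * (j : ℤ) - 2 * (k : ℤ)) =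
      (4 : ℝ) ^ (-(k : ℤ)) *
        ∑ n ∈ Finset.Icc 1 (k + 1),
          (Nat.choose (2 * k + 1) (2 * n - 1) : ℝ) * (q + q⁻¹) ^ (2 * (k + 1 - n)) *
            ((q + q⁻¹) ^ 2 - 4) ^ (n - 1) := by
  have hsq : (q + q⁻¹) ^ 2 - 4 = (q - q⁻¹) ^ 2 := by field_simp; ring
  have hterm (j : ℕ) (hj : j ∈ range (2 * k + 1)) :
      q ^ (2 * (j : ℤ) - 2 * (k : ℤ)) = q ^ j * q⁻¹ ^ (2 * k - j) := by
    have hjk : j ≤ 2 * k := Nat.lt_succ_iff.mp (mem_range.mp hj)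
    rw [inv_pow, ← div_eq_mul_inv, ← zpow_natCast, ← zpow_natCast, ← zpow_sub₀ hq]
    push_cast [hjk]
    congr 1
    ring
  have hreindex :
      ∑ n ∈ Icc 1 (k + 1), (Nat.choose (2 * k + 1) (2 * n - 1) : ℝ) *
          (q + q⁻¹) ^ (2 * (k + 1 - n)) * ((q + q⁻¹) ^ 2 - 4) ^ (n - 1) =
        ∑ i ∈ range (k + 1), ((2 * k + 1).choose (2 * i + 1) : ℝ) *
          (q + q⁻¹) ^ (2 * (k - i)) * ((q - q⁻¹) ^ 2) ^ i := by
    rw [← Ico_add_one_right_eq_Icc, sum_Ico_eq_sum_range, hsq]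
    refine sum_congr rfl fun i _ => ?_
    rw [show 2 * (1 + i) - 1 = 2 * i + 1 by omega, show k + 1 - (1 + i) = k - i by omega,
      Nat.add_sub_cancel_left]
  rw [sum_congr rfl hterm, hreindex, sum_choose_odd_mul_add_pow_mul_sub_sq, zpow_neg,
    zpow_natCast, inv_mul_cancel_left₀ (pow_ne_zero k four_ne_zero)]
end

section
/- Let q, z, C be real numbers with q ≠ 0, z ≠ 0, satisfying z·C² + (z(q−1) − 1)·C + 1 = 0 and 1 − zq − zC ≠ 0. Then for every natural number k, (1 − zC) · z^k / (1 − zq − zC)^{k+1} = C · (C − 1)^k / q^k. -/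
/-- If `zC² + (z(q−1) − 1)C + 1 = 0` with `q ≠ 0`, `z ≠ 0` and
`1 − zq − zC ≠ 0`, then for every `k : ℕ`,
`(1 − zC)·z^k/(1 − zq − zC)^(k+1) = C·(C−1)^k/q^k`. -/
theorem stmt7 (q z C : ℝ) (hq : q ≠ 0) (hz : z ≠ 0)
    (hquad : z * C ^ 2 + (z * (q - 1) - 1) * C + 1 = 0)
    (hden : 1 - z * q - z * C ≠ 0) (k : ℕ) :
    (1 - z * C) * z ^ k / (1 - z * q - z * C) ^ (k + 1) = C * (C - 1) ^ k / q ^ k := by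
  have h0 : 1 - z * C = C * (1 - z * q - z * C) := by linear_combination hquad
  have h1 : z * q = (C - 1) * (1 - z * q - z * C) := by linear_combination hquad
  induction k with
  | zero =>
    simp only [pow_zero, zero_add, pow_one, mul_one]
    rw [div_eq_iff hden, div_one]
    linarith [h0]
  | succ n ih =>
    have hstep : z / (1 - z * q - z * C) = (C - 1) / q := by
      rw [div_eq_div_iff hden hq]
      linarith [h1]
    have : (1 - z * C) * z ^ (n + 1) / (1 - z * q - z * C) ^ (n + 1 + 1)
        = ((1 - z * C) * z ^ n / (1 - z * q - z * C) ^ (n + 1)) * (z / (1 - z * q - z * C)) := by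
      rw [pow_succ z n, pow_succ (1 - z * q - z * C) (n + 1)]
      field_simp
    rw [this, ih, hstep, pow_succ (C - 1) n, pow_succ q n]
    field_simp
end

section
/- Let q, r, z, C be real numbers with q ≠ 0, z ≠ 0, satisfying z·C² + (z(q−1) − 1)·C + 1 = 0, 1 − z(q+r) − zC ≠ 0, and r² + (q + 1 − 1/z)·r + q ≠ 0. Then (1 − zC) / (1 − z(q+r) − zC) = ( (r+q)·C − r/z ) / ( r² + (q + 1 − 1/z)·r + q ). -/
/-- If `zC² + (z(q−1) − 1)C + 1 = 0` with `q ≠ 0`, `z ≠ 0`,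
`1 − z(q+r) − zC ≠ 0` and `r² + (q + 1 − 1/z)r + q ≠ 0`, then
`(1 − zC)/(1 − z(q+r) − zC) = ((r+q)C − r/z)/(r² + (q + 1 − 1/z)r + q)`. -/
theorem stmt9 (q r z C : ℝ) (hq : q ≠ 0) (hz : z ≠ 0)
    (hquad : z * C ^ 2 + (z * (q - 1) - 1) * C + 1 = 0)
    (h1 : 1 - z * (q + r) - z * C ≠ 0)
    (h2 : r ^ 2 + (q + 1 - 1 / z) * r + q ≠ 0) :
    (1 - z * C) / (1 - z * (q + r) - z * C) =
      ((r + q) * C - r / z) / (r ^ 2 + (q + 1 - 1 / z) * r + q) := by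
  rw [div_eq_div_iff h1 h2]
  field_simp
  linear_combination (z * (r + q)) * hquad
end

section
/- Let n ≥ 1 be an integer and let q be a real number with q > 0 and q ≠ 1. Set z₋ := 1/(1+√q)² and z₊ := 1/(1−√q)². Then (|q−1|/(2π)) · ∫_{z₋}^{z₊} z^{−n−2} · √((z − z₋)(z₊ − z)) dz = ∑_{j=1}^{n} (1/n)·C(n,j)·C(n,j−1)·q^j, where C(n,r) denotes the binomial coefficient. -/
/-!
The substitution `z = 1/w` turns the integral into the moment
`J_{n-1} = ∫_a^b w^(n-1) √((w-a)(b-w)) dw` over `[a, b] = [(1-√q)², (1+√q)²]`, divided by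
`√(ab) = |1 - q|`. Since `(w-a)(b-w)` vanishes at both ends, integrating the derivative of
`w^p ((w-a)(b-w))^(3/2)` gives a three-term recurrence for the moments; with `a + b = 2(1+q)` and
`ab = (1-q)²` it is the recurrence `(m+4) N_{m+3} = (2m+5)(1+q) N_{m+2} - (m+1)(1-q)² N_{m+1}`
of the Narayana polynomials, which one checks coefficientwise. Both sequences start with
`J_0 = 2πq`, `J_1 = 2π(q + q²)`.
-/

open Finset Real intervalIntegral

/-- The coefficient of `q ^ k` in the `n`-th Narayana polynomial. It vanishes at `k = 0`, so the
index shifts `k - 1`, `k - 2` below never pick up a spurious term. -/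
noncomputable def narayana (n : ℕ) : ℕ → ℝ
  | 0 => 0
  | k + 1 => n.choose (k + 1) * n.choose k / n

theorem cast_choose_succ_succ (n k : ℕ) :
    ((n + 1).choose (k + 1) : ℝ) = (n + 1) * n.choose k / (k + 1) := by
  rw [eq_div_iff (by positivity)]
  exact_mod_cast (Nat.add_one_mul_choose_eq n k).symm

theorem cast_choose_succ_right (n k : ℕ) :
    (n.choose (k + 1) : ℝ) = n.choose k * (n - k) / (k + 1) := by
  rw [eq_div_iff (by positivity)]
  rcases le_or_gt k n with h | h
  · rw [← Nat.cast_sub h]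
    exact_mod_cast Nat.choose_succ_right_eq n k
  · simp [Nat.choose_eq_zero_of_lt h, Nat.choose_eq_zero_of_lt (h.trans (Nat.lt_succ_self k))]

theorem narayana_recurrence (m k : ℕ) :
    ((m : ℝ) + 4) * narayana (m + 3) k
      = (2 * m + 5) * (narayana (m + 2) k + narayana (m + 2) (k - 1))
        - (m + 1) * (narayana (m + 1) k - 2 * narayana (m + 1) (k - 1)
          + narayana (m + 1) (k - 2)) := by
  have h3 (j : ℕ) := cast_choose_succ_succ (m + 2) j
  have h2 (j : ℕ) := cast_choose_succ_succ (m + 1) j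
  have h1 (j : ℕ) := cast_choose_succ_right (m + 1) j
  -- every binomial coefficient is reduced to `(m + 1).choose k'`, leaving a rational identity
  rcases k with _ | _ | _ | i
  all_goals
    simp only [narayana, Nat.add_sub_cancel, h3, h2, h1, Nat.choose_zero_right]
    push_cast
    field_simp
    ring

theorem narayana_zero_right (n : ℕ) : narayana n 0 = 0 := rfl

theorem narayana_of_lt {n k : ℕ} (h : n < k) : narayana n k = 0 := by
  obtain ⟨j, rfl⟩ : ∃ j, k = j + 1 := ⟨k - 1, by omega⟩
  simp [narayana, Nat.choose_eq_zero_of_lt h]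

noncomputable def narayanaPoly (n : ℕ) (q : ℝ) : ℝ :=
  ∑ k ∈ range (n + 1), narayana n k * q ^ k

theorem narayanaPoly_eq_sum_range {n K : ℕ} (h : n + 1 ≤ K) (q : ℝ) :
    narayanaPoly n q = ∑ k ∈ range K, narayana n k * q ^ k :=
  sum_subset (range_subset_range.2 h) fun k _ hk ↦ by
    rw [narayana_of_lt (by simpa using hk), zero_mul]

theorem sum_range_succ_pred_mul_pow {f : ℕ → ℝ} (hf : f 0 = 0) (q : ℝ) (K : ℕ) :
    ∑ k ∈ range (K + 1), f (k - 1) * q ^ k = q * ∑ k ∈ range K, f k * q ^ k := by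
  rw [sum_range_succ', mul_sum]
  simp [hf, pow_succ, mul_comm, mul_left_comm]

theorem narayanaPoly_recurrence (m : ℕ) (q : ℝ) :
    ((m : ℝ) + 4) * narayanaPoly (m + 3) q
      = (2 * m + 5) * (1 + q) * narayanaPoly (m + 2) q
        - (m + 1) * (1 - q) ^ 2 * narayanaPoly (m + 1) q := by
  have hN3 := narayanaPoly_eq_sum_range (n := m + 3) (K := m + 6) (by omega) q
  have hN2 := narayanaPoly_eq_sum_range (n := m + 2) (K := m + 6) (by omega) q
  have hN1 := narayanaPoly_eq_sum_range (n := m + 1) (K := m + 6) (by omega) q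
  have hqN2 : q * narayanaPoly (m + 2) q
      = ∑ k ∈ range (m + 6), narayana (m + 2) (k - 1) * q ^ k := by
    rw [narayanaPoly_eq_sum_range (K := m + 5) (by omega),
      sum_range_succ_pred_mul_pow (narayana_zero_right _)]
  have hqN1 : q * narayanaPoly (m + 1) q
      = ∑ k ∈ range (m + 6), narayana (m + 1) (k - 1) * q ^ k := by
    rw [narayanaPoly_eq_sum_range (K := m + 5) (by omega),
      sum_range_succ_pred_mul_pow (narayana_zero_right _)]
  have hq2N1 : q ^ 2 * narayanaPoly (m + 1) q
      = ∑ k ∈ range (m + 6), narayana (m + 1) (k - 2) * q ^ k := by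
    rw [narayanaPoly_eq_sum_range (K := m + 4) (by omega), pow_two, mul_assoc,
      ← sum_range_succ_pred_mul_pow (narayana_zero_right _),
      ← sum_range_succ_pred_mul_pow (f := fun k ↦ narayana (m + 1) (k - 1))
        (narayana_zero_right _)]
    rfl
  rw [hN3, mul_sum]
  calc ∑ k ∈ range (m + 6), ((m : ℝ) + 4) * (narayana (m + 3) k * q ^ k)
      = ∑ k ∈ range (m + 6), ((2 * m + 5) * (narayana (m + 2) k * q ^ k
          + narayana (m + 2) (k - 1) * q ^ k) - (m + 1) * (narayana (m + 1) k * q ^ k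
          - 2 * (narayana (m + 1) (k - 1) * q ^ k) + narayana (m + 1) (k - 2) * q ^ k)) :=
        sum_congr rfl fun k _ ↦ by linear_combination q ^ k * narayana_recurrence m k
    _ = _ := by
        simp only [sum_add_distrib, sum_sub_distrib, ← mul_sum]
        rw [← hqN2, ← hqN1, ← hq2N1, ← hN2, ← hN1]
        ring

theorem narayanaPoly_one (q : ℝ) : narayanaPoly 1 q = q := by
  simp [narayanaPoly, sum_range_succ, narayana]

theorem narayanaPoly_two (q : ℝ) : narayanaPoly 2 q = q + q ^ 2 := by
  simp [narayanaPoly, sum_range_succ, narayana]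

theorem narayanaPoly_eq_sum_Icc (n : ℕ) (q : ℝ) :
    narayanaPoly n q
      = ∑ j ∈ Icc 1 n, (1 / (n : ℝ)) * n.choose j * n.choose (j - 1) * q ^ j := by
  rw [narayanaPoly, range_eq_Ico, Ico_add_one_right_eq_Icc,
    ← insert_Icc_add_one_left_eq_Icc n.zero_le, sum_insert (by simp), narayana_zero_right,
    zero_mul, zero_add]
  refine sum_congr rfl fun j hj ↦ ?_
  obtain ⟨k, rfl⟩ : ∃ k, j = k + 1 := ⟨j - 1, by simp at hj; omega⟩
  simp only [narayana, Nat.add_sub_cancel]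
  ring

noncomputable def semicircleMoment (a b : ℝ) (k : ℕ) : ℝ :=
  ∫ w in a..b, w ^ k * √((w - a) * (b - w))

theorem intervalIntegrable_semicircleMoment (a b : ℝ) (k : ℕ) :
    IntervalIntegrable (fun w ↦ w ^ k * √((w - a) * (b - w))) MeasureTheory.volume a b :=
  (by fun_prop : Continuous fun w : ℝ ↦ w ^ k * √((w - a) * (b - w))).intervalIntegrable a b

theorem semicircleMoment_zero {a b : ℝ} (hab : a ≤ b) :
    semicircleMoment a b 0 = π * (b - a) ^ 2 / 8 := by
  have hr : 0 ≤ (b - a) / 2 := by linarith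
  have h := smul_integral_comp_mul_add (a := -1) (b := 1) (fun w ↦ √((w - a) * (b - w)))
    ((b - a) / 2) ((a + b) / 2)
  have hsub (x : ℝ) : ((b - a) / 2 * x + (a + b) / 2 - a) * (b - ((b - a) / 2 * x + (a + b) / 2))
      = ((b - a) / 2) ^ 2 * (1 - x ^ 2) := by ring
  simp only [hsub, sqrt_mul (sq_nonneg _), sqrt_sq hr, integral_const_mul,
    integral_sqrt_one_sub_sq, smul_eq_mul] at h
  rw [show (b - a) / 2 * -1 + (a + b) / 2 = a by ring,
    show (b - a) / 2 * 1 + (a + b) / 2 = b by ring] at h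
  simp only [semicircleMoment, pow_zero, one_mul, ← h]
  ring

theorem HasDerivAt.mul_sqrt_self {f : ℝ → ℝ} {f' x : ℝ} (hf : HasDerivAt f f' x)
    (hx : 0 < f x) :
    HasDerivAt (fun y ↦ f y * √(f y)) (3 / 2 * f' * √(f x)) x := by
  refine (hf.fun_mul (hf.sqrt hx.ne')).congr_deriv ?_
  have hs : √(f x) ≠ 0 := (sqrt_pos.2 hx).ne'
  field_simp
  rw [sq_sqrt hx.le]
  ring

theorem semicircleMoment_recurrence {a b : ℝ} (hab : a ≤ b) (p : ℕ) :
    (p + 3) * semicircleMoment a b (p + 1)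
      = (p + 3 / 2) * (a + b) * semicircleMoment a b p
        - p * a * b * semicircleMoment a b (p - 1) := by
  let P : ℝ → ℝ := fun w ↦ (w - a) * (b - w)
  have hderiv (x : ℝ) (hx : x ∈ Set.Ioo a b) : HasDerivAt (fun w ↦ w ^ p * (P w * √(P w)))
      (p * x ^ (p - 1) * (P x * √(P x)) + x ^ p * (3 / 2 * (a + b - 2 * x) * √(P x))) x := by
    have hP : HasDerivAt P (a + b - 2 * x) x := by
      refine (((hasDerivAt_id x).sub_const a).fun_mul
        ((hasDerivAt_id x).const_sub b)).congr_deriv ?_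
      simp only [id]
      ring
    exact (hasDerivAt_pow p x).mul (hP.mul_sqrt_self (mul_pos (sub_pos.2 hx.1) (sub_pos.2 hx.2)))
  have hpow (x : ℝ) : (p : ℝ) * x ^ (p - 1) * x = p * x ^ p := by
    rcases p with _ | p
    · simp
    · rw [Nat.add_sub_cancel, mul_assoc, ← pow_succ]
  have hint := integral_eq_sub_of_hasDerivAt_of_le hab (by fun_prop) hderiv
    (Continuous.intervalIntegrable (by fun_prop) _ _)
  have hderiv_eq (x : ℝ) :
      p * x ^ (p - 1) * (P x * √(P x)) + x ^ p * (3 / 2 * (a + b - 2 * x) * √(P x))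
      = (p + 3 / 2) * (a + b) * (x ^ p * √(P x)) - p * a * b * (x ^ (p - 1) * √(P x))
        - (p + 3) * (x ^ (p + 1) * √(P x)) := by
    simp only [P]
    linear_combination (a + b - x) * √((x - a) * (b - x)) * hpow x
  have hI := intervalIntegrable_semicircleMoment a b
  rw [integral_congr fun x _ ↦ hderiv_eq x,
    integral_sub ((hI p).const_mul _ |>.sub ((hI _).const_mul _)) ((hI _).const_mul _),
    integral_sub ((hI p).const_mul _) ((hI _).const_mul _),
    integral_const_mul, integral_const_mul, integral_const_mul] at hint
  simp only [P, sub_self, zero_mul, mul_zero] at hint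
  unfold semicircleMoment
  linear_combination -hint

theorem integral_inv_eq_integral_comp_inv_div_sq {a b : ℝ} (ha : 0 < a) (hab : a ≤ b)
    (g : ℝ → ℝ) : ∫ z in b⁻¹..a⁻¹, g z = ∫ w in a..b, g w⁻¹ / w ^ 2 := by
  have hpos : ∀ x ∈ Set.uIcc a b, 0 < x := fun x hx ↦
    ha.trans_le (Set.uIcc_of_le hab ▸ hx).1
  have hIoo : ∀ x ∈ Set.Ioo (min a b) (max a b), 0 < x := fun x hx ↦
    hpos x (Set.Ioo_subset_Icc_self hx)
  have h := integral_deriv_smul_comp_of_deriv_nonpos (g := g)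
    (fun x hx ↦ (continuousAt_inv₀ (hpos x hx).ne').continuousWithinAt)
    (fun x hx ↦ hasDerivAt_inv (hIoo x hx).ne') (fun x _ ↦ neg_nonpos.2 (by positivity))
  rw [integral_symm, ← h, ← integral_neg]
  simp [div_eq_inv_mul]

theorem integral_zpow_mul_sqrt_eq_semicircleMoment {a b : ℝ} (ha : 0 < a) (hab : a ≤ b)
    (n : ℕ) :
    ∫ z in b⁻¹..a⁻¹, z ^ (-(n : ℤ) - 3) * √((z - b⁻¹) * (a⁻¹ - z))
      = semicircleMoment a b n / √(a * b) := by
  rw [integral_inv_eq_integral_comp_inv_div_sq ha hab, semicircleMoment, ← integral_div]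
  refine integral_congr fun w hw ↦ ?_
  have hw : 0 < w := ha.trans_le (Set.uIcc_of_le hab ▸ hw).1
  have hb : 0 < b := ha.trans_le hab
  have hprod : (w⁻¹ - b⁻¹) * (a⁻¹ - w⁻¹) = (w - a) * (b - w) / (a * b * w ^ 2) := by
    field_simp
  have hzpow : w⁻¹ ^ (-(n : ℤ) - 3) = w ^ (n + 3) := by
    rw [inv_zpow', neg_sub, sub_neg_eq_add, add_comm]
    exact_mod_cast zpow_natCast w (n + 3)
  rw [hprod, hzpow, sqrt_div' _ (by positivity), sqrt_mul' _ (sq_nonneg w), sqrt_sq hw.le]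
  field_simp
  ring

theorem semicircleMoment_eq_narayanaPoly {q : ℝ} (hq : 0 ≤ q) (k : ℕ) :
    semicircleMoment ((1 - √q) ^ 2) ((1 + √q) ^ 2) k = 2 * π * narayanaPoly (k + 1) q := by
  have hs : √q ^ 2 = q := sq_sqrt hq
  have hab : (1 - √q) ^ 2 ≤ (1 + √q) ^ 2 := by nlinarith [sqrt_nonneg q]
  have hsum : (1 - √q) ^ 2 + (1 + √q) ^ 2 = 2 * (1 + q) := by linear_combination 2 * hs
  have hprod : (1 - √q) ^ 2 * (1 + √q) ^ 2 = (1 - q) ^ 2 := by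
    linear_combination (q - 2 + √q ^ 2) * hs
  have hJ₀ : semicircleMoment ((1 - √q) ^ 2) ((1 + √q) ^ 2) 0 = 2 * π * q := by
    rw [semicircleMoment_zero hab]
    linear_combination 2 * π * hs
  induction k using Nat.twoStepInduction with
  | zero => rw [hJ₀, narayanaPoly_one]
  | one =>
    have h := semicircleMoment_recurrence hab 0
    rw [hJ₀, hsum] at h
    rw [narayanaPoly_two]
    push_cast at h
    linear_combination h / 3
  | more k ih₀ ih₁ =>
    have h := semicircleMoment_recurrence hab (k + 1)
    rw [Nat.add_sub_cancel, ih₀, ih₁, hsum, mul_assoc _ ((1 - √q) ^ 2), hprod] at h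
    apply mul_left_cancel₀ (by positivity : (k : ℝ) + 4 ≠ 0)
    push_cast at h
    linear_combination h - 2 * π * narayanaPoly_recurrence k q

/-- Branch-cut integral for the `q`-Catalan numbers: for `n ≥ 1`, `q > 0`,
`q ≠ 1`, with `z₋ = 1/(1+√q)²` and `z₊ = 1/(1−√q)²`,
`(|q−1|/(2π)) ∫_{z₋}^{z₊} z^(−n−2)·√((z−z₋)(z₊−z)) dz
  = ∑_{j=1}^{n} (1/n)·C(n,j)·C(n,j−1)·q^j`. -/
theorem stmt11 (n : ℕ) (hn : 1 ≤ n) (q : ℝ) (hq : 0 < q) (hq1 : q ≠ 1) :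
    (|q - 1| / (2 * Real.pi)) *
      ∫ z in (1 / (1 + Real.sqrt q) ^ 2)..(1 / (1 - Real.sqrt q) ^ 2),
        z ^ (-(n : ℤ) - 2) *
          Real.sqrt ((z - 1 / (1 + Real.sqrt q) ^ 2) * (1 / (1 - Real.sqrt q) ^ 2 - z))
      = ∑ j ∈ Finset.Icc 1 n,
          (1 / (n : ℝ)) * (Nat.choose n j : ℝ) * (Nat.choose n (j - 1) : ℝ) * q ^ j := by
  obtain ⟨m, rfl⟩ : ∃ m, n = m + 1 := ⟨n - 1, by omega⟩
  have hs : √q ^ 2 = q := sq_sqrt hq.le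
  have ha : 0 < (1 - √q) ^ 2 := by
    have : 1 - √q ≠ 0 := sub_ne_zero.2 fun h ↦ hq1 (by rw [← hs, ← h, one_pow])
    positivity
  have hab : (1 - √q) ^ 2 ≤ (1 + √q) ^ 2 := by nlinarith [sqrt_nonneg q]
  have hsqrt : √((1 - √q) ^ 2 * (1 + √q) ^ 2) = |q - 1| := by
    rw [show (1 - √q) ^ 2 * (1 + √q) ^ 2 = (q - 1) ^ 2 by
      linear_combination (q - 2 + √q ^ 2) * hs, sqrt_sq_eq_abs]
  have hexp : -((m + 1 : ℕ) : ℤ) - 2 = -(m : ℤ) - 3 := by push_cast; ring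
  simp only [one_div ((1 + √q) ^ 2), one_div ((1 - √q) ^ 2), hexp]
  rw [integral_zpow_mul_sqrt_eq_semicircleMoment ha hab m, hsqrt,
    semicircleMoment_eq_narayanaPoly hq.le, ← narayanaPoly_eq_sum_Icc]
  have : |q - 1| ≠ 0 := abs_ne_zero.2 (sub_ne_zero.2 hq1)
  field_simp
end

section
/- Let n ≥ 1 be an integer and let q be a real number with q > 0 and q ≠ 1. Set z₋ := 1/(1+√q)² and z₊ := 1/(1−√q)². Then (1/(π·|q−1|)) · ∫_{z₋}^{z₊} z^{−n} · ((z − z₋)(z₊ − z))^{−1/2} dz = ∑_{j=0}^{n−1} C(n−1, j)²·q^j, where C(n,r) denotes the binomial coefficient. -/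
/-!
The substitution `z = 1 / (1 + q + 2 √q cos θ)` maps `θ ∈ [0, π]` monotonically onto the
branch cut `[z₋, z₊]` and turns `((z - z₋)(z₊ - z))^(-1/2) dz` into `|q - 1| z dθ`, so the integral
becomes `|q - 1| ∫₀^π (1 + q + 2 √q cos θ)^(n-1) dθ`. By evenness this is half the integral
over `[-π, π]`, and there `1 + q + 2 √q cos θ = |1 + √q e^{iθ}|²`: expanding
`(1 + √q e^{iθ})^(n-1)` binomially, orthogonality of the characters `e^{ikθ}` (Parseval) leaves
`2π ∑ⱼ C(n-1, j)² qʲ`.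
-/

open scoped Real
open MeasureTheory Finset

section Parseval

open Complex

theorem integral_exp_int_mul_I (l : ℤ) :
    ∫ φ : ℝ in -π..π, exp (l * I * φ) = if l = 0 then 2 * (π : ℂ) else 0 := by
  split_ifs with hl
  · simp [hl]; ring
  have hc : (l : ℂ) * I ≠ 0 := mul_ne_zero (Int.cast_ne_zero.mpr hl) I_ne_zero
  -- `exp (l I φ)` is `2π`-periodic, so its primitive takes the same value at `±π`
  have hper : exp (l * I * π) = exp (l * I * ↑(-π)) := by
    rw [← mul_one (exp (l * I * ↑(-π))), ← exp_int_mul_two_pi_mul_I l, ← Complex.exp_add]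
    push_cast; ring_nf
  rw [integral_exp_mul_complex hc, hper, sub_self, zero_div]

theorem integral_sum_mul_sum_exp_pow (N : ℕ) (a b : ℕ → ℂ) :
    ∫ φ : ℝ in -π..π, (∑ j ∈ range N, a j * exp (φ * I) ^ j) *
        (∑ k ∈ range N, b k * exp (-φ * I) ^ k) = 2 * π * ∑ j ∈ range N, a j * b j := by
  have hterm : ∀ j k : ℕ, ∀ φ : ℝ, a j * exp (φ * I) ^ j * (b k * exp (-φ * I) ^ k) =
      a j * b k * exp (((j - k : ℤ) : ℂ) * I * φ) := by
    intro j k φ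
    rw [← Complex.exp_nat_mul, ← Complex.exp_nat_mul, mul_mul_mul_comm, ← Complex.exp_add]
    push_cast; ring_nf
  simp_rw [sum_mul_sum, hterm]
  rw [intervalIntegral.integral_finsetSum fun j _ =>
    Continuous.intervalIntegrable (by fun_prop) _ _]
  refine (sum_congr rfl fun j _ => intervalIntegral.integral_finsetSum fun k _ =>
    Continuous.intervalIntegrable (by fun_prop) _ _).trans ?_
  simp only [intervalIntegral.integral_const_mul, integral_exp_int_mul_I, sub_eq_zero,
    Nat.cast_inj, mul_ite, mul_zero, sum_ite_eq, mul_sum]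
  exact sum_congr rfl fun j hj => by rw [if_pos hj, mul_comm]

theorem integral_one_add_sq_add_two_mul_cos_pow (m : ℕ) (s : ℝ) :
    ∫ φ in -π..π, (1 + s ^ 2 + 2 * s * Real.cos φ) ^ m =
      2 * π * ∑ j ∈ range (m + 1), (m.choose j : ℝ) ^ 2 * s ^ (2 * j) := by
  have hfactor : ∀ φ : ℝ, ((1 + s ^ 2 + 2 * s * Real.cos φ : ℝ) : ℂ) =
      (1 + s * exp (φ * I)) * (1 + s * exp (-φ * I)) := by
    intro φ
    have hunit : exp (φ * I) * exp (-φ * I) = 1 := by rw [← Complex.exp_add]; simp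
    push_cast
    linear_combination (s : ℂ) * two_cos (φ : ℂ) - (s : ℂ) ^ 2 * hunit
  have hbinom : ∀ z : ℂ,
      (1 + s * z) ^ m = ∑ j ∈ range (m + 1), (s ^ j * m.choose j : ℂ) * z ^ j := fun z => by
    rw [add_comm, add_pow]
    exact sum_congr rfl fun j _ => by ring
  apply Complex.ofReal_injective
  rw [← intervalIntegral.integral_ofReal]
  simp_rw [Complex.ofReal_pow, hfactor, mul_pow, hbinom, integral_sum_mul_sum_exp_pow]
  push_cast
  simp_rw [mul_sum]
  exact sum_congr rfl fun j _ => by ring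

end Parseval

theorem Function.Even.intervalIntegral_neg_self {E : Type*} [NormedAddCommGroup E]
    [NormedSpace ℝ E] {f : ℝ → E} (hf : f.Even) {a : ℝ}
    (hint : IntervalIntegrable f volume (-a) a) :
    ∫ x in -a..a, f x = 2 • ∫ x in 0..a, f x := by
  have h0 : (0 : ℝ) ∈ Set.uIcc (-a) a := by
    rcases le_total 0 a with h | h <;> simp [h]
  have hleft : ∫ x in -a..0, f x = ∫ x in 0..a, f x := by
    simpa [hf _] using intervalIntegral.integral_comp_neg (a := -a) (b := 0) f
  rw [← intervalIntegral.integral_add_adjacent_intervals (b := 0)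
    (hint.mono_set (Set.uIcc_subset_uIcc_left h0))
    (hint.mono_set (Set.uIcc_subset_uIcc_right h0)), hleft, two_nsmul]

noncomputable def branchCutIntegrand (n : ℕ) (a b z : ℝ) : ℝ :=
  z ^ (-(n : ℤ)) * ((z - a) * (b - z)) ^ (-(1 : ℝ) / 2)

theorem rpow_neg_half_sq {x : ℝ} (hx : 0 < x) : (x ^ 2) ^ (-(1 : ℝ) / 2) = x⁻¹ := by
  rw [neg_div, Real.rpow_neg (sq_nonneg x), ← Real.sqrt_eq_rpow, Real.sqrt_sq hx.le]

theorem mul_branchCutIntegrand_one_div (m : ℕ) {A B w c : ℝ} (hA : 0 < A) (hB : 0 < B)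
    (hw : 0 < w) (hc : 0 < c) (h : (A - w) * (w - B) = c ^ 2) :
    c / w ^ 2 * branchCutIntegrand (m + 1) (1 / A) (1 / B) (1 / w) = √(A * B) * w ^ m := by
  have hAB : 0 < √(A * B) := Real.sqrt_pos.2 (mul_pos hA hB)
  have hprod : (1 / w - 1 / A) * (1 / B - 1 / w) = (c / (w * √(A * B))) ^ 2 := by
    rw [div_pow, mul_pow, Real.sq_sqrt (mul_pos hA hB).le, ← h]
    field_simp
  rw [branchCutIntegrand, hprod, rpow_neg_half_sq (by positivity), one_div, inv_zpow', neg_neg,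
    zpow_natCast]
  field_simp
  ring

theorem integral_branchCutIntegrand {s : ℝ} (hs : 0 < s) (hs1 : s ≠ 1) (m : ℕ) :
    ∫ z in 1 / (1 + s) ^ 2..1 / (1 - s) ^ 2,
        branchCutIntegrand (m + 1) (1 / (1 + s) ^ 2) (1 / (1 - s) ^ 2) z =
      |1 - s ^ 2| * ∫ θ in 0..π, (1 + s ^ 2 + 2 * s * Real.cos θ) ^ m := by
  set w : ℝ → ℝ := fun θ => 1 + s ^ 2 + 2 * s * Real.cos θ
  have hB : 0 < (1 - s) ^ 2 := pow_two_pos_of_ne_zero (sub_ne_zero.2 hs1.symm)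
  have hw_pos : ∀ θ, 0 < w θ := fun θ => by nlinarith [Real.neg_one_le_cos θ]
  have hw_deriv : ∀ θ, HasDerivAt (fun θ => 1 / w θ) (2 * s * Real.sin θ / w θ ^ 2) θ := by
    intro θ
    have := (((Real.hasDerivAt_cos θ).const_mul (2 * s)).const_add (1 + s ^ 2)).fun_inv
      (hw_pos θ).ne'
    simpa [one_div, w, neg_div] using this
  have hsubst := integral_Icc_deriv_smul_of_deriv_nonneg
    (g := branchCutIntegrand (m + 1) (1 / (1 + s) ^ 2) (1 / (1 - s) ^ 2))
    (continuous_iff_continuousAt.2 fun θ => (hw_deriv θ).continuousAt).continuousOn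
    (fun θ _ => hw_deriv θ)
    (fun θ hθ => div_nonneg (by have := Real.sin_pos_of_pos_of_lt_pi hθ.1 hθ.2; positivity)
      (sq_nonneg _)) Real.pi_pos.le
  have hw0 : w 0 = (1 + s) ^ 2 := by simp [w]; ring
  have hwπ : w π = (1 - s) ^ 2 := by simp [w]; ring
  simp only [hw0, hwπ] at hsubst
  have hpointwise : ∀ θ ∈ Set.Ioo 0 π, (2 * s * Real.sin θ / w θ ^ 2) •
      branchCutIntegrand (m + 1) (1 / (1 + s) ^ 2) (1 / (1 - s) ^ 2) (1 / w θ) =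
      |1 - s ^ 2| * w θ ^ m := by
    intro θ hθ
    have hsin := Real.sin_pos_of_pos_of_lt_pi hθ.1 hθ.2
    rw [smul_eq_mul,
      mul_branchCutIntegrand_one_div m (by positivity) hB (hw_pos θ) (by positivity),
      show (1 + s) ^ 2 * (1 - s) ^ 2 = (1 - s ^ 2) ^ 2 by ring, Real.sqrt_sq_eq_abs]
    -- remaining goal: `((1 + s)² - w θ) (w θ - (1 - s)²) = (2 s sin θ)²`
    linear_combination (-4 * s ^ 2) * Real.sin_sq_add_cos_sq θ
  have hle : 1 / (1 + s) ^ 2 ≤ 1 / (1 - s) ^ 2 := one_div_le_one_div_of_le hB (by nlinarith)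
  rw [intervalIntegral.integral_of_le hle, ← integral_Icc_eq_integral_Ioc, ← hsubst,
    integral_Icc_eq_integral_Ioo, setIntegral_congr_fun measurableSet_Ioo hpointwise,
    integral_const_mul, intervalIntegral.integral_of_le Real.pi_pos.le,
    integral_Ioc_eq_integral_Ioo]

theorem integral_zero_pi_one_add_sq_add_two_mul_cos_pow (m : ℕ) (s : ℝ) :
    ∫ θ in 0..π, (1 + s ^ 2 + 2 * s * Real.cos θ) ^ m =
      π * ∑ j ∈ range (m + 1), (m.choose j : ℝ) ^ 2 * (s ^ 2) ^ j := by
  have heven : Function.Even fun θ => (1 + s ^ 2 + 2 * s * Real.cos θ) ^ m :=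
    fun θ => by simp only [Real.cos_neg]
  have h := heven.intervalIntegral_neg_self (a := π)
    (Continuous.intervalIntegrable (by fun_prop) _ _)
  rw [integral_one_add_sq_add_two_mul_cos_pow, two_nsmul] at h
  simp only [pow_mul] at h
  linarith

/-- Branch-cut integral for the functions `D_n(q)`: for `n ≥ 1`, `q > 0`,
`q ≠ 1`, with `z₋ = 1/(1+√q)²` and `z₊ = 1/(1−√q)²`,
`(1/(π|q−1|)) ∫_{z₋}^{z₊} z^(−n)·((z−z₋)(z₊−z))^(−1/2) dz
  = ∑_{j=0}^{n−1} C(n−1,j)²·q^j`. -/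
theorem stmt12 (n : ℕ) (hn : 1 ≤ n) (q : ℝ) (hq : 0 < q) (hq1 : q ≠ 1) :
    (1 / (Real.pi * |q - 1|)) *
      ∫ z in (1 / (1 + Real.sqrt q) ^ 2)..(1 / (1 - Real.sqrt q) ^ 2),
        z ^ (-(n : ℤ)) *
          ((z - 1 / (1 + Real.sqrt q) ^ 2) * (1 / (1 - Real.sqrt q) ^ 2 - z)) ^ (-(1 : ℝ) / 2)
      = ∑ j ∈ Finset.range n, (Nat.choose (n - 1) j : ℝ) ^ 2 * q ^ j := by
  obtain ⟨m, rfl⟩ : ∃ m, n = m + 1 := ⟨n - 1, by omega⟩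
  obtain ⟨s, hs, rfl⟩ : ∃ s, 0 < s ∧ q = s ^ 2 :=
    ⟨√q, Real.sqrt_pos.2 hq, (Real.sq_sqrt hq.le).symm⟩
  have hs1 : s ≠ 1 := by rintro rfl; simp at hq1
  have hq1' : |s ^ 2 - 1| ≠ 0 := abs_ne_zero.2 (sub_ne_zero.2 hq1)
  rw [Real.sqrt_sq hs.le]
  change 1 / (π * _) * ∫ z in _.._, branchCutIntegrand (m + 1) _ _ z = _
  rw [integral_branchCutIntegrand hs hs1, integral_zero_pi_one_add_sq_add_two_mul_cos_pow,
    abs_sub_comm, Nat.add_sub_cancel]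
  field_simp
end
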